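/- If qᵀDv ≤ √ω ‖v‖_A ‖q‖_C for all v ∈ ℝ^{n_u} and q ∈ ℝ^{n_p}, then the matrix C⁻¹ D A⁻¹ Dᵀ satisfies the operator-norm bound ‖C⁻¹ D A⁻¹ Dᵀ x‖_C ≤ ω ‖x‖_C for every x ∈ ℝ^{n_p}; in particular the spectral radius of C⁻¹ D A⁻¹ Dᵀ is at most ω. -/

import Mathlib

/-! With `y = A⁻¹ Dᵀ x` and `z = C⁻¹ D y` one has `‖y‖²_A = xᵀ D y` and `‖z‖²_C = zᵀ D y`, so the
coupling bound gives `‖y‖_A ≤ √ω ‖x‖_C` and `‖z‖_C ≤ √ω ‖y‖_A`; both are instances of the fact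
that `‖M⁻¹ g‖_M` is the dual norm of `v ↦ g ⬝ᵥ v`. For the spectral bound, a complex eigenvector
`u = a + i b` of the real matrix splits its `C`-energy as `‖a‖²_C + ‖b‖²_C`, and the real bound
applied to `a` and `b` gives `|μ|² ≤ ω²`. -/

open Matrix

/-- The `M`-weighted norm `‖x‖_M = √(xᵀ M x)`. -/
noncomputable def mnorm {n : ℕ} (M : Matrix (Fin n) (Fin n) ℝ) (x : Fin n → ℝ) : ℝ :=
  Real.sqrt (x ⬝ᵥ M.mulVec x)

lemma mnorm_nonneg {n : ℕ} (M : Matrix (Fin n) (Fin n) ℝ) (x : Fin n → ℝ) : 0 ≤ mnorm M x :=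
  Real.sqrt_nonneg _

lemma sq_mnorm {n : ℕ} {M : Matrix (Fin n) (Fin n) ℝ} (hM : M.PosSemidef) (x : Fin n → ℝ) :
    mnorm M x ^ 2 = x ⬝ᵥ M *ᵥ x :=
  Real.sq_sqrt (by simpa using hM.dotProduct_mulVec_nonneg x)

lemma mnorm_inv_mulVec_le {n : ℕ} {M : Matrix (Fin n) (Fin n) ℝ} (hM : M.PosDef)
    {g : Fin n → ℝ} {K : ℝ} (hK : 0 ≤ K) (hg : ∀ v, g ⬝ᵥ v ≤ K * mnorm M v) :
    mnorm M (M⁻¹ *ᵥ g) ≤ K := by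
  set w := M⁻¹ *ᵥ g
  have hMw : M *ᵥ w = g := by
    rw [mulVec_mulVec, mul_nonsing_inv _ hM.det_pos.ne'.isUnit, one_mulVec]
  have hw : mnorm M w ^ 2 ≤ K * mnorm M w := by
    rw [sq_mnorm hM.posSemidef, hMw, dotProduct_comm]
    exact hg w
  nlinarith [mnorm_nonneg M w]

theorem mnorm_inv_mul_mul_inv_mul_transpose_mulVec_le {nu np : ℕ}
    {A : Matrix (Fin nu) (Fin nu) ℝ} {C : Matrix (Fin np) (Fin np) ℝ}
    {D : Matrix (Fin np) (Fin nu) ℝ} {ω : ℝ} (hω : 0 ≤ ω) (hA : A.PosDef) (hC : C.PosDef)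
    (hcoup : ∀ (v : Fin nu → ℝ) (q : Fin np → ℝ),
      q ⬝ᵥ D *ᵥ v ≤ √ω * mnorm A v * mnorm C q) (x : Fin np → ℝ) :
    mnorm C ((C⁻¹ * D * A⁻¹ * Dᵀ) *ᵥ x) ≤ ω * mnorm C x := by
  set y := A⁻¹ *ᵥ Dᵀ *ᵥ x
  have hy : mnorm A y ≤ √ω * mnorm C x :=
    mnorm_inv_mulVec_le hA (mul_nonneg (Real.sqrt_nonneg _) (mnorm_nonneg _ _)) fun v => by
      rw [mulVec_transpose, ← dotProduct_mulVec]
      exact (hcoup v x).trans_eq (by ring)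
  have hz : mnorm C (C⁻¹ *ᵥ D *ᵥ y) ≤ √ω * mnorm A y :=
    mnorm_inv_mulVec_le hC (mul_nonneg (Real.sqrt_nonneg _) (mnorm_nonneg _ _)) fun q => by
      rw [dotProduct_comm]
      exact (hcoup y q).trans_eq (by ring)
  calc mnorm C ((C⁻¹ * D * A⁻¹ * Dᵀ) *ᵥ x) = mnorm C (C⁻¹ *ᵥ D *ᵥ y) := by
        simp only [y, mulVec_mulVec, Matrix.mul_assoc]
    _ ≤ √ω * (√ω * mnorm C x) := hz.trans (by gcongr)
    _ = ω * mnorm C x := by rw [← mul_assoc, Real.mul_self_sqrt hω]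

section Complexification

variable {n : Type*} [Fintype n]

lemma re_comp_map_mulVec (M : Matrix n n ℝ) (u : n → ℂ) :
    Complex.re ∘ (M.map (algebraMap ℝ ℂ) *ᵥ u) = M *ᵥ (Complex.re ∘ u) := by
  ext i
  simp [mulVec, dotProduct, Complex.re_sum]

lemma im_comp_map_mulVec (M : Matrix n n ℝ) (u : n → ℂ) :
    Complex.im ∘ (M.map (algebraMap ℝ ℂ) *ᵥ u) = M *ᵥ (Complex.im ∘ u) := by
  ext i
  simp [mulVec, dotProduct, Complex.im_sum]

lemma re_star_dotProduct_map_mulVec (C : Matrix n n ℝ) (u : n → ℂ) :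
    (star u ⬝ᵥ C.map (algebraMap ℝ ℂ) *ᵥ u).re =
      (Complex.re ∘ u) ⬝ᵥ C *ᵥ (Complex.re ∘ u) + (Complex.im ∘ u) ⬝ᵥ C *ᵥ (Complex.im ∘ u) := by
  simp [mulVec, dotProduct, Complex.re_sum, Finset.mul_sum, ← Finset.sum_add_distrib]

lemma star_smul_dotProduct_mulVec_smul (C : Matrix n n ℂ) (μ : ℂ) (u : n → ℂ) :
    star (μ • u) ⬝ᵥ C *ᵥ (μ • u) = Complex.normSq μ * (star u ⬝ᵥ C *ᵥ u) := by
  rw [mulVec_smul, dotProduct_smul, star_smul, smul_dotProduct, smul_smul, smul_eq_mul,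
    Complex.star_def, Complex.mul_conj]

lemma exists_mulVec_eq_smul_of_mem_spectrum [DecidableEq n] {K : Type*} [Field K]
    {M : Matrix n n K} {μ : K} (hμ : μ ∈ spectrum K M) : ∃ u ≠ 0, M *ᵥ u = μ • u := by
  rw [← spectrum_toLin', ← Module.End.hasEigenvalue_iff_mem_spectrum] at hμ
  obtain ⟨u, hu⟩ := hμ.exists_hasEigenvector
  exact ⟨u, hu.2, by simpa using Module.End.mem_eigenspace_iff.mp hu.1⟩

lemma re_star_dotProduct_map_mulVec_pos {C : Matrix n n ℝ} (hC : C.PosDef) {u : n → ℂ}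
    (hu : u ≠ 0) : 0 < (star u ⬝ᵥ C.map (algebraMap ℝ ℂ) *ᵥ u).re := by
  have hQ : ∀ v, 0 ≤ v ⬝ᵥ C *ᵥ v := fun v => by
    simpa using hC.posSemidef.dotProduct_mulVec_nonneg v
  have hre_im : Complex.re ∘ u ≠ 0 ∨ Complex.im ∘ u ≠ 0 := by
    by_contra! h
    exact hu (funext fun i => Complex.ext (congrFun h.1 i) (congrFun h.2 i))
  rw [re_star_dotProduct_map_mulVec]
  rcases hre_im with h | h
  · exact add_pos_of_pos_of_nonneg (by simpa using hC.dotProduct_mulVec_pos h) (hQ _)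
  · exact add_pos_of_nonneg_of_pos (hQ _) (by simpa using hC.dotProduct_mulVec_pos h)

end Complexification

theorem norm_le_of_mem_spectrum_of_mnorm_mulVec_le {n : ℕ} {M C : Matrix (Fin n) (Fin n) ℝ}
    (hC : C.PosDef) {c : ℝ} (hc : 0 ≤ c) (hM : ∀ x, mnorm C (M *ᵥ x) ≤ c * mnorm C x) {μ : ℂ}
    (hμ : μ ∈ spectrum ℂ (M.map (algebraMap ℝ ℂ))) : ‖μ‖ ≤ c := by
  obtain ⟨u, hu0, hu⟩ := exists_mulVec_eq_smul_of_mem_spectrum hμ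
  have hQ : ∀ x, (M *ᵥ x) ⬝ᵥ C *ᵥ (M *ᵥ x) ≤ c ^ 2 * (x ⬝ᵥ C *ᵥ x) := fun x => by
    rw [← sq_mnorm hC.posSemidef, ← sq_mnorm hC.posSemidef, ← mul_pow]
    exact pow_le_pow_left₀ (mnorm_nonneg _ _) (hM x) 2
  set q := (star u ⬝ᵥ C.map (algebraMap ℝ ℂ) *ᵥ u).re
  have hμq : ‖μ‖ ^ 2 * q ≤ c ^ 2 * q := calc
    ‖μ‖ ^ 2 * q = (star (μ • u) ⬝ᵥ C.map (algebraMap ℝ ℂ) *ᵥ (μ • u)).re := by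
      rw [star_smul_dotProduct_mulVec_smul, Complex.re_ofReal_mul, Complex.sq_norm]
    _ = (star (M.map (algebraMap ℝ ℂ) *ᵥ u) ⬝ᵥ C.map (algebraMap ℝ ℂ) *ᵥ
          (M.map (algebraMap ℝ ℂ) *ᵥ u)).re := by rw [hu]
    _ ≤ c ^ 2 * q := by
      rw [re_star_dotProduct_map_mulVec, re_comp_map_mulVec, im_comp_map_mulVec,
        show q = _ from re_star_dotProduct_map_mulVec C u, mul_add]
      exact add_le_add (hQ _) (hQ _)
  have := le_of_mul_le_mul_right hμq (re_star_dotProduct_map_mulVec_pos hC hu0)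
  exact (pow_le_pow_iff_left₀ (norm_nonneg μ) hc two_ne_zero).mp this

theorem stmt_1_general {nu np : ℕ}
    (A : Matrix (Fin nu) (Fin nu) ℝ) (C : Matrix (Fin np) (Fin np) ℝ)
    (D : Matrix (Fin np) (Fin nu) ℝ) (ω : ℝ) (hω : 0 < ω)
    (hA : A.PosDef) (hC : C.PosDef)
    (hcoup : ∀ (v : Fin nu → ℝ) (q : Fin np → ℝ),
      q ⬝ᵥ D.mulVec v ≤ Real.sqrt ω * mnorm A v * mnorm C q) :
    (∀ x : Fin np → ℝ,
        mnorm C ((C⁻¹ * D * A⁻¹ * Dᵀ).mulVec x) ≤ ω * mnorm C x) ∧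
    (∀ μ ∈ spectrum ℂ ((C⁻¹ * D * A⁻¹ * Dᵀ).map (algebraMap ℝ ℂ)), ‖μ‖ ≤ ω) := by
  have hbound := mnorm_inv_mul_mul_inv_mul_transpose_mulVec_le hω.le hA hC hcoup
  exact ⟨hbound, fun μ hμ => norm_le_of_mem_spectrum_of_mnorm_mulVec_le hC hω.le hbound hμ⟩

theorem stmt_1 {nu np : ℕ} (hnu : 0 < nu) (hnp : 0 < np)
    (A : Matrix (Fin nu) (Fin nu) ℝ) (C : Matrix (Fin np) (Fin np) ℝ)
    (D : Matrix (Fin np) (Fin nu) ℝ) (ω : ℝ) (hω : 0 < ω)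
    (hA : A.PosDef) (hC : C.PosDef)
    (hcoup : ∀ (v : Fin nu → ℝ) (q : Fin np → ℝ),
      q ⬝ᵥ D.mulVec v ≤ Real.sqrt ω * mnorm A v * mnorm C q) :
    (∀ x : Fin np → ℝ,
        mnorm C ((C⁻¹ * D * A⁻¹ * Dᵀ).mulVec x) ≤ ω * mnorm C x) ∧
    (∀ μ ∈ spectrum ℂ ((C⁻¹ * D * A⁻¹ * Dᵀ).map (algebraMap ℝ ℂ)), ‖μ‖ ≤ ω) :=
  stmt_1_general A C D ω hω hA hC hcoup
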